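/- arXiv:1811.06707 — 3 statements merged into one kernel-verified Lean document; each statement's English description precedes it below -/
import Mathlib

section
/- Let I and K be ideals on ℕ such that K is not contained in I, let X be a nonzero real normed space, and let x ≠ y in X. Pick M ∈ K \ I and define x_n = y if n ∈ M and x_n = x otherwise. Then (x_n) is weakly K-convergent to x (hence weakly I^K-convergent to x) but not weakly I-convergent to x. -/
open Classical Filter

/-- An ideal on ℕ: contains ∅, closed under subsets and finite unions. -/
def IsIdeal (I : Set (Set ℕ)) : Prop :=
  ∅ ∈ I ∧ (∀ A B : Set ℕ, A ∈ I → B ⊆ A → B ∈ I) ∧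
    (∀ A B : Set ℕ, A ∈ I → B ∈ I → A ∪ B ∈ I)

/-- A nontrivial (proper) ideal. -/
def NontrivialIdeal (I : Set (Set ℕ)) : Prop :=
  IsIdeal I ∧ Set.univ ∉ I ∧ I ≠ {∅}

/-- An admissible ideal: nontrivial and containing all singletons. -/
def AdmissibleIdeal (I : Set (Set ℕ)) : Prop :=
  NontrivialIdeal I ∧ ∀ n : ℕ, ({n} : Set ℕ) ∈ I

/-- The modified sequence: `x n` on `M`, the constant `a` off `M`. -/
noncomputable def modSeq {X : Type*} (M : Set ℕ) (x : ℕ → X) (a : X) : ℕ → X :=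
  fun n => if n ∈ M then x n else a

/-- Weak `K`-convergence of a sequence in a normed space. -/
def WeakConv {X : Type*} [NormedAddCommGroup X] [NormedSpace ℝ X]
    (K : Set (Set ℕ)) (x : ℕ → X) (a : X) : Prop :=
  ∀ f : X →L[ℝ] ℝ, ∀ ε : ℝ, 0 < ε → {n : ℕ | ε ≤ |f (x n) - f a|} ∈ K

/-- Weak `I^K`-convergence: some `M` in the dual filter of `I` such that the
modified sequence is weakly `K`-convergent. -/
def WeakIK {X : Type*} [NormedAddCommGroup X] [NormedSpace ℝ X]
    (I K : Set (Set ℕ)) (x : ℕ → X) (a : X) : Prop :=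
  ∃ M : Set ℕ, Mᶜ ∈ I ∧ WeakConv K (modSeq M x a) a

/-- Ordinary weak convergence. -/
def WeakTendsto {X : Type*} [NormedAddCommGroup X] [NormedSpace ℝ X]
    (x : ℕ → X) (a : X) : Prop :=
  ∀ f : X →L[ℝ] ℝ, Tendsto (fun n => f (x n)) atTop (nhds (f a))

/-- Weak* `K`-convergence of a sequence of continuous linear functionals. -/
def WeakStarConv {X : Type*} [NormedAddCommGroup X] [NormedSpace ℝ X]
    (K : Set (Set ℕ)) (f : ℕ → X →L[ℝ] ℝ) (g : X →L[ℝ] ℝ) : Prop :=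
  ∀ x : X, ∀ ε : ℝ, 0 < ε → {n : ℕ | ε ≤ |f n x - g x|} ∈ K

/-- Weak* `I^K`-convergence. -/
def WeakStarIK {X : Type*} [NormedAddCommGroup X] [NormedSpace ℝ X]
    (I K : Set (Set ℕ)) (f : ℕ → X →L[ℝ] ℝ) (g : X →L[ℝ] ℝ) : Prop :=
  ∃ M : Set ℕ, Mᶜ ∈ I ∧ WeakStarConv K (modSeq M f g) g

/-- Ordinary weak* convergence (pointwise on X). -/
def WeakStarTendsto {X : Type*} [NormedAddCommGroup X] [NormedSpace ℝ X]
    (f : ℕ → X →L[ℝ] ℝ) (g : X →L[ℝ] ℝ) : Prop :=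
  ∀ x : X, Tendsto (fun n => f n x) atTop (nhds (g x))

/-- The join of two ideals: `{A ∪ B : A ∈ I, B ∈ K}`. -/
def idealJoin (I K : Set (Set ℕ)) : Set (Set ℕ) :=
  {C | ∃ A ∈ I, ∃ B ∈ K, C = A ∪ B}

lemma IsIdeal.empty_mem {I : Set (Set ℕ)} (hI : IsIdeal I) : ∅ ∈ I := hI.1

lemma IsIdeal.mem_of_subset {I : Set (Set ℕ)} (hI : IsIdeal I) {A B : Set ℕ}
    (hA : A ∈ I) (hBA : B ⊆ A) : B ∈ I :=
  hI.2.1 A B hA hBA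

section WeakConv

variable {X : Type*} [NormedAddCommGroup X] [NormedSpace ℝ X]

@[simp]
lemma modSeq_univ {α : Type*} (s : ℕ → α) (a : α) : modSeq Set.univ s a = s := by
  funext n
  simp [modSeq]

lemma weakConv_of_eq_off_mem {K : Set (Set ℕ)} (hK : IsIdeal K) {s : ℕ → X} {a : X}
    {M : Set ℕ} (hMK : M ∈ K) (hs : ∀ n ∉ M, s n = a) : WeakConv K s a := by
  intro f ε hε
  refine hK.mem_of_subset hMK fun n hn => ?_
  by_contra hnM
  rw [Set.mem_ofPred_eq, hs n hnM, sub_self, abs_zero] at hn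
  linarith

lemma WeakConv.weakIK {I K : Set (Set ℕ)} (hI : IsIdeal I) {s : ℕ → X} {a : X}
    (hs : WeakConv K s a) : WeakIK I K s a :=
  ⟨Set.univ, by simpa using hI.empty_mem, by simpa using hs⟩

lemma exists_dual_sub_eq_norm {x y : X} (hxy : x ≠ y) :
    ∃ f : X →L[ℝ] ℝ, f y - f x = ‖y - x‖ := by
  obtain ⟨f, -, hf⟩ :=
    exists_dual_vector ℝ (y - x) (norm_ne_zero_iff.mpr (sub_ne_zero.mpr hxy.symm))
  exact ⟨f, by rw [← map_sub, hf, RCLike.ofReal_real_eq_id, id]⟩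

lemma not_weakConv_of_eq_on_not_mem {I : Set (Set ℕ)} (hI : IsIdeal I) {s : ℕ → X}
    {x y : X} (hxy : x ≠ y) {M : Set ℕ} (hMI : M ∉ I) (hs : ∀ n ∈ M, s n = y) :
    ¬ WeakConv I s x := by
  intro hconv
  obtain ⟨f, hf⟩ := exists_dual_sub_eq_norm hxy
  have hpos : 0 < ‖y - x‖ := norm_pos_iff.mpr (sub_ne_zero.mpr hxy.symm)
  refine hMI (hI.mem_of_subset (hconv f _ hpos) fun n hn => ?_)
  rw [Set.mem_ofPred_eq, hs n hn, hf, abs_of_pos hpos]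

end WeakConv

theorem stmt_6 {X : Type*} [NormedAddCommGroup X] [NormedSpace ℝ X]
    (I K : Set (Set ℕ)) (hI : IsIdeal I) (hK : IsIdeal K)
    (x y : X) (hxy : x ≠ y) (M : Set ℕ) (hMK : M ∈ K) (hMI : M ∉ I) :
    WeakConv K (fun n => if n ∈ M then y else x) x ∧
    WeakIK I K (fun n => if n ∈ M then y else x) x ∧
    ¬ WeakConv I (fun n => if n ∈ M then y else x) x := by
  have hconv : WeakConv K (fun n => if n ∈ M then y else x) x :=
    weakConv_of_eq_off_mem hK hMK fun n hn => if_neg hn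
  exact ⟨hconv, hconv.weakIK hI,
    not_weakConv_of_eq_on_not_mem hI hxy hMI fun n hn => if_pos hn⟩
end

section
/- Let X be a normed space and I, K ideals on ℕ such that I ∨ K is a proper ideal. A sequence (x_n) in X is weakly I^K-convergent to x if and only if it is weakly (I ∨ K)^K-convergent to x. -/
open Classical Filter

theorem IsIdeal.mem_of_subset_s8 {K : Set (Set ℕ)} (hK : IsIdeal K) {A B : Set ℕ}
    (hB : B ∈ K) (hAB : A ⊆ B) : A ∈ K :=
  hK.2.1 B A hB hAB

theorem IsIdeal.union_mem {K : Set (Set ℕ)} (hK : IsIdeal K) {A B : Set ℕ}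
    (hA : A ∈ K) (hB : B ∈ K) : A ∪ B ∈ K :=
  hK.2.2 A B hA hB

theorem mem_idealJoin_left {I K : Set (Set ℕ)} (hK : IsIdeal K) {A : Set ℕ} (hA : A ∈ I) :
    A ∈ idealJoin I K :=
  ⟨A, hA, ∅, hK.1, (Set.union_empty A).symm⟩

theorem setOf_modSeq_ne_subset_symmDiff {X : Type*} (M N : Set ℕ) (x : ℕ → X) (a : X) :
    {n | modSeq M x a n ≠ modSeq N x a n} ⊆ symmDiff M N := by
  intro n hn
  by_cases hM : n ∈ M <;> by_cases hN : n ∈ N <;> simp_all [modSeq, Set.mem_symmDiff]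

theorem WeakConv.congr_of_ne_mem {X : Type*} [NormedAddCommGroup X] [NormedSpace ℝ X]
    {K : Set (Set ℕ)} (hK : IsIdeal K) {y z : ℕ → X} {a : X} (hy : WeakConv K y a)
    (hyz : {n | z n ≠ y n} ∈ K) : WeakConv K z a := by
  intro f ε hε
  refine hK.mem_of_subset_s8 (hK.union_mem (hy f ε hε) hyz) fun n hn => ?_
  by_cases h : z n = y n
  · exact Or.inl (show ε ≤ |f (y n) - f a| from h ▸ hn)
  · exact Or.inr h

theorem WeakIK.mono_left {X : Type*} [NormedAddCommGroup X] [NormedSpace ℝ X]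
    {I I' K : Set (Set ℕ)} (hII' : I ⊆ I') {x : ℕ → X} {a : X} (h : WeakIK I K x a) :
    WeakIK I' K x a :=
  let ⟨M, hM, hconv⟩ := h
  ⟨M, hII' hM, hconv⟩

/-- If `Mᶜ = A ∪ B` with `B ∈ K`, the modification along `Aᶜ` differs from the one along `M`
only on `B`, which `K`-convergence does not see. -/
theorem WeakIK.of_idealJoin {X : Type*} [NormedAddCommGroup X] [NormedSpace ℝ X]
    {I K : Set (Set ℕ)} (hK : IsIdeal K) {x : ℕ → X} {a : X}
    (h : WeakIK (idealJoin I K) K x a) : WeakIK I K x a := by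
  obtain ⟨M, ⟨A, hA, B, hB, hMc⟩, hconv⟩ := h
  have hdiff : symmDiff Aᶜ M ⊆ B := by
    intro n hn
    have hn' : n ∈ Mᶜ ↔ n ∈ A ∪ B := by rw [hMc]
    simp only [Set.mem_symmDiff, Set.mem_compl_iff, Set.mem_union] at hn hn'
    tauto
  refine ⟨Aᶜ, by rwa [compl_compl], hconv.congr_of_ne_mem hK ?_⟩
  exact hK.mem_of_subset_s8 hB ((setOf_modSeq_ne_subset_symmDiff _ _ x a).trans hdiff)

theorem stmt_8_general {X : Type*} [NormedAddCommGroup X] [NormedSpace ℝ X]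
    (I K : Set (Set ℕ)) (hK : IsIdeal K)
    (x : ℕ → X) (a : X) :
    WeakIK I K x a ↔ WeakIK (idealJoin I K) K x a :=
  ⟨WeakIK.mono_left fun _ => mem_idealJoin_left hK, WeakIK.of_idealJoin hK⟩

theorem stmt_8 {X : Type*} [NormedAddCommGroup X] [NormedSpace ℝ X]
    (I K : Set (Set ℕ)) (hI : IsIdeal I) (hK : IsIdeal K)
    (hjoin : Set.univ ∉ idealJoin I K)
    (x : ℕ → X) (a : X) :
    WeakIK I K x a ↔ WeakIK (idealJoin I K) K x a :=
  stmt_8_general I K hK x a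
end

section
/- Let I and K be admissible ideals on ℕ and X a normed space containing a sequence (z_n) of points distinct from some x ∈ X with z_n weakly convergent to x. If for every sequence in X weak I-convergence to a point implies weak I^K-convergence to that point, then the condition AP(I,K) holds: for every family of mutually disjoint sets A_n ∈ I there exist sets B_n ∈ I with A_n Δ B_n ∈ K for each n and ∪_n B_n ∈ I. -/
open Classical Filter

/-!
Glue the sequence `z` along the disjoint family: `y m = z n` for `m ∈ A n` and `y m = x`
elsewhere. Since `z` converges weakly to `x`, for each functional `f` and `ε > 0` only finitely
many `A n` meet `{m | ε ≤ |f (y m) - f x|}`, so `y` is weakly `I`-convergent to `x`. Weak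
`I^K`-convergence yields `M` with `Mᶜ ∈ I`; on `A n ∩ M` the modified sequence is the constant
`z n ≠ x`, so a functional separating `z n` from `x` puts `A n ∩ M` into `K`. Then
`B n = A n \ M` works: `A n ∆ B n = A n ∩ M` and `⋃ n, B n ⊆ Mᶜ`.
-/

open Function

namespace IsIdeal

variable {I : Set (Set ℕ)}

theorem mem_of_subset_s10 (hI : IsIdeal I) {A B : Set ℕ} (hA : A ∈ I) (hBA : B ⊆ A) : B ∈ I :=
  hI.2.1 A B hA hBA

theorem biUnion_finset_mem {ι : Type*} (hI : IsIdeal I) (s : Finset ι) {A : ι → Set ℕ}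
    (hA : ∀ i, A i ∈ I) : (⋃ i ∈ s, A i) ∈ I := by
  classical
  induction s using Finset.induction with
  | empty => simpa using hI.1
  | insert i s _ ih =>
    rw [Finset.set_biUnion_insert]
    exact hI.2.2 _ _ (hA i) ih

end IsIdeal

theorem modSeq_of_mem {X : Type*} {M : Set ℕ} {y : ℕ → X} {a : X} {m : ℕ} (hm : m ∈ M) :
    modSeq M y a m = y m :=
  if_pos hm

section Glue

variable {X : Type*}

noncomputable def glueSeq (A : ℕ → Set ℕ) (z : ℕ → X) (a : X) (m : ℕ) : X :=
  if h : ∃ n, m ∈ A n then z h.choose else a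

theorem glueSeq_of_mem {A : ℕ → Set ℕ} (hA : Pairwise (Disjoint on A)) (z : ℕ → X) (a : X)
    {n m : ℕ} (hm : m ∈ A n) : glueSeq A z a m = z n := by
  have hex : ∃ k, m ∈ A k := ⟨n, hm⟩
  have hchoose : hex.choose = n :=
    hA.eq (Set.not_disjoint_iff.mpr ⟨m, hex.choose_spec, hm⟩)
  rw [glueSeq, dif_pos hex, hchoose]

theorem glueSeq_of_notMem {A : ℕ → Set ℕ} (z : ℕ → X) (a : X) {m : ℕ}
    (hm : ∀ n, m ∉ A n) : glueSeq A z a m = a :=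
  dif_neg (not_exists.mpr hm)

variable [NormedAddCommGroup X] [NormedSpace ℝ X]

theorem weakConv_glueSeq {I : Set (Set ℕ)} (hI : IsIdeal I) {A : ℕ → Set ℕ}
    (hAI : ∀ n, A n ∈ I) (hA : Pairwise (Disjoint on A)) {z : ℕ → X} {a : X}
    (hz : WeakTendsto z a) : WeakConv I (glueSeq A z a) a := by
  intro f ε hε
  obtain ⟨N, hN⟩ := Metric.tendsto_atTop.mp (hz f) ε hε
  refine hI.mem_of_subset_s10 (hI.biUnion_finset_mem (Finset.range N) hAI) fun m hm => ?_
  by_cases hex : ∃ n, m ∈ A n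
  · obtain ⟨n, hn⟩ := hex
    have hfar : ε ≤ dist (f (z n)) (f a) := by
      rw [Real.dist_eq, ← glueSeq_of_mem hA z a hn]
      exact hm
    have hnN : n < N := by
      by_contra! hNn
      exact (hN n hNn).not_ge hfar
    exact Set.mem_biUnion (Finset.mem_range.mpr hnN) hn
  · have hm : ε ≤ |f (glueSeq A z a m) - f a| := hm
    rw [glueSeq_of_notMem z a (not_exists.mp hex), sub_self, abs_zero] at hm
    exact absurd hε hm.not_gt

theorem WeakConv.mem_of_eqOn_const {K : Set (Set ℕ)} (hK : IsIdeal K) {w : ℕ → X} {a v : X}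
    (hw : WeakConv K w a) (hva : v ≠ a) {S : Set ℕ} (hS : ∀ m ∈ S, w m = v) : S ∈ K := by
  obtain ⟨g, hg⟩ := SeparatingDual.exists_separating_of_ne (R := ℝ) hva
  refine hK.mem_of_subset_s10 (hw g _ (abs_pos.mpr (sub_ne_zero.mpr hg))) fun m hm => ?_
  simp only [Set.mem_ofPred_eq, hS m hm, le_refl]

end Glue

theorem stmt_10 {X : Type*} [NormedAddCommGroup X] [NormedSpace ℝ X]
    (I K : Set (Set ℕ)) (hI : AdmissibleIdeal I) (hK : AdmissibleIdeal K)
    (x : X) (z : ℕ → X) (hz : ∀ n, z n ≠ x) (hzconv : WeakTendsto z x)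
    (h : ∀ (w : ℕ → X) (a : X), WeakConv I w a → WeakIK I K w a) :
    ∀ A : ℕ → Set ℕ, (∀ n, A n ∈ I) → (∀ i j, i ≠ j → A i ∩ A j = ∅) →
      ∃ B : ℕ → Set ℕ, (∀ n, B n ∈ I) ∧ (∀ n, symmDiff (A n) (B n) ∈ K) ∧
        (⋃ n, B n) ∈ I := by
  intro A hAI hdisj
  have hA : Pairwise (Disjoint on A) := fun i j hij =>
    Set.disjoint_iff_inter_eq_empty.mpr (hdisj i j hij)
  obtain ⟨M, hMc, hWK⟩ := h _ x (weakConv_glueSeq hI.1.1 hAI hA hzconv)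
  refine ⟨fun n => A n \ M, fun n => hI.1.1.mem_of_subset_s10 (hAI n) Set.sdiff_subset, fun n => ?_,
    hI.1.1.mem_of_subset_s10 hMc (Set.iUnion_subset fun n => Set.sdiff_subset_compl _ _)⟩
  have hsymm : symmDiff (A n) (A n \ M) = A n ∩ M := by
    ext m
    simp only [Set.mem_symmDiff, Set.mem_sdiff, Set.mem_inter_iff]
    tauto
  rw [hsymm]
  exact hWK.mem_of_eqOn_const hK.1.1 (hz n) fun m hm => by
    rw [modSeq_of_mem hm.2, glueSeq_of_mem hA z x hm.1]
end
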